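/- Strong divisibility: if k ≥ 1 is an integer with k ≢ 1 (mod 3), then for all positive integers m, n, gcd(B_{k,m}, B_{k,n}) = B_{k,gcd(m,n)}. -/

import Mathlib

def B (k : ℤ) : ℕ → ℤ
  | 0 => 0
  | 1 => 1
  | (n+2) => 3*k * B k (n+1) + (1-k) * B k n

lemma B_zero (k : ℤ) : B k 0 = 0 := rfl

lemma B_one (k : ℤ) : B k 1 = 1 := rfl

lemma B_rec (k : ℤ) (n : ℕ) : B k (n+2) = 3*k * B k (n+1) + (1-k) * B k n := rfl

lemma B_nonneg_mono (k : ℤ) (hk : 1 ≤ k) : ∀ n, 0 ≤ B k n ∧ B k n ≤ B k (n+1) := by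
  intro n
  induction n with
  | zero => simp [B_zero, B_one]
  | succ n ih =>
    obtain ⟨h0, h1⟩ := ih
    refine ⟨le_trans h0 h1, ?_⟩
    rw [B_rec]
    nlinarith

lemma B_nonneg (k : ℤ) (hk : 1 ≤ k) (n : ℕ) : 0 ≤ B k n := (B_nonneg_mono k hk n).1

/-- Addition formula. -/
lemma B_add (k : ℤ) : ∀ (m n : ℕ),
    B k (m + n + 1) = B k (m+1) * B k (n+1) + (1-k) * (B k m * B k n)
  | 0, n => by simp [B_zero, B_one]
  | 1, n => by
    have h : 1 + n + 1 = n + 2 := by omega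
    rw [h, B_rec, B_one, B_rec, B_zero, B_one]
    ring
  | (m+2), n => by
    have h1 := B_add k (m+1) n
    have h2 := B_add k m n
    have e : m + 2 + n + 1 = (m + n + 1) + 2 := by omega
    have e1 : m + n + 1 + 1 = (m + 1) + n + 1 := by omega
    rw [e, B_rec k (m+n+1), e1, h1, h2, show m+2+1 = m+1+2 from rfl,
      B_rec k (m+1)]
    have c1 : B k (m+1+1) = B k (m+2) := rfl
    rw [c1, B_rec k m]
    ring

lemma coprime_three (k : ℤ) (hk3 : ¬ k ≡ 1 [ZMOD 3]) : IsCoprime (k - 1) 3 := by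
  have h3 : ¬ (3 : ℤ) ∣ (k - 1) := by
    intro hd
    refine hk3 (Int.modEq_iff_dvd.mpr ?_)
    rw [show (1:ℤ) - k = -(k-1) by ring]
    exact dvd_neg.mpr hd
  exact (Int.prime_three.coprime_iff_not_dvd.mpr h3).symm

lemma coprime_k (k : ℤ) : IsCoprime (k - 1) k := by
  have h := (isCoprime_one_right (x := k - 1)).add_mul_left_right 1
  simpa using h

lemma coprime_B_succ (k : ℤ) (hk3 : ¬ k ≡ 1 [ZMOD 3]) :
    ∀ n : ℕ, IsCoprime (k - 1) (B k (n+1)) := by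
  intro n
  induction n with
  | zero => simpa [B_one] using (isCoprime_one_right (x := k - 1))
  | succ n ih =>
    have h3k : IsCoprime (k - 1) (3 * k) :=
      ((coprime_three k hk3).mul_right (coprime_k k))
    have hprod : IsCoprime (k - 1) (3 * k * B k (n+1)) := h3k.mul_right ih
    have := hprod.add_mul_left_right (-(B k n))
    have e : 3 * k * B k (n+1) + (k - 1) * -(B k n) = B k (n+2) := by
      rw [B_rec]; ring
    rwa [e] at this

lemma coprime_consecutive (k : ℤ) (hk3 : ¬ k ≡ 1 [ZMOD 3]) :
    ∀ n : ℕ, IsCoprime (B k n) (B k (n+1)) := by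
  intro n
  induction n with
  | zero => simp [B_zero, B_one, isCoprime_one_right]
  | succ n ih =>
    have h1 : IsCoprime (B k (n+1)) ((1 - k) * B k n) := by
      have hc : IsCoprime (B k (n+1)) (1 - k) := by
        have := (coprime_B_succ k hk3 n).symm.neg_right
        simpa [neg_sub] using this
      exact hc.mul_right ih.symm
    have h2 := h1.add_mul_left_right (3 * k)
    have e : (1 - k) * B k n + B k (n+1) * (3 * k) = B k (n+2) := by
      rw [B_rec]; ring
    rwa [e] at h2

lemma int_gcd_add_mul_right_right (a b c : ℤ) :
    Int.gcd a (b + c * a) = Int.gcd a b := by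
  apply Nat.dvd_antisymm
  · apply Int.natCast_dvd_natCast.mp
    refine Int.dvd_coe_gcd (Int.gcd_dvd_left _ _) ?_
    have h := Int.gcd_dvd_right (a := a) (b := b + c * a)
    have ha := Int.gcd_dvd_left (a := a) (b := b + c * a)
    simpa using dvd_sub h (ha.mul_left c)
  · apply Int.natCast_dvd_natCast.mp
    refine Int.dvd_coe_gcd (Int.gcd_dvd_left _ _) ?_
    exact dvd_add (Int.gcd_dvd_right _ _) ((Int.gcd_dvd_left _ _).mul_left c)

lemma gcd_B_add_self (k : ℤ) (hk3 : ¬ k ≡ 1 [ZMOD 3]) (m n : ℕ) :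
    Int.gcd (B k m) (B k (n + m)) = Int.gcd (B k m) (B k n) := by
  rcases Nat.eq_zero_or_pos n with rfl | h
  · simp [B_zero, Int.gcd]
  obtain ⟨s, rfl⟩ : ∃ s, n = s + 1 := ⟨n - 1, by omega⟩
  have e : s + 1 + m = m + s + 1 := by omega
  rw [e, B_add k m s]
  have e2 : B k (m+1) * B k (s+1) + (1-k) * (B k m * B k s)
      = B k (m+1) * B k (s+1) + ((1-k) * B k s) * B k m := by ring
  rw [e2, int_gcd_add_mul_right_right]
  -- cancel the coprime factor B k (m+1)
  have hcop : Nat.Coprime (B k (m+1)).natAbs (B k m).natAbs := by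
    have := (coprime_consecutive k hk3 m).symm
    exact Int.isCoprime_iff_gcd_eq_one.mp this
  show Nat.gcd (B k m).natAbs (B k (m+1) * B k (s+1)).natAbs
      = Nat.gcd (B k m).natAbs (B k (s+1)).natAbs
  rw [Int.natAbs_mul]
  exact Nat.Coprime.gcd_mul_left_cancel_right _ hcop

lemma gcd_B_add_mul_self (k : ℤ) (hk3 : ¬ k ≡ 1 [ZMOD 3]) (m n : ℕ) :
    ∀ q : ℕ, Int.gcd (B k m) (B k (n + q * m)) = Int.gcd (B k m) (B k n)
  | 0 => by simp
  | q + 1 => by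
    rw [← gcd_B_add_mul_self k hk3 m n q, add_mul, ← add_assoc, one_mul,
      gcd_B_add_self k hk3 m _]

lemma B_gcd (k : ℤ) (hk3 : ¬ k ≡ 1 [ZMOD 3]) (m n : ℕ) :
    Int.gcd (B k m) (B k n) = (B k (Nat.gcd m n)).natAbs := by
  induction m, n using Nat.gcd.induction with
  | H0 n => simp [B_zero, Int.gcd]
  | H1 m n hpos ih =>
    rw [← Nat.gcd_rec m n] at ih
    conv_lhs => rw [← Nat.mod_add_div' n m]
    rw [gcd_B_add_mul_self k hk3 m (n % m) (n / m), Int.gcd_comm (B k m) _]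
    exact ih

theorem stmt19 (k : ℤ) (hk : 1 ≤ k) (hk3 : ¬ k ≡ 1 [ZMOD 3]) (m n : ℕ) (hm : 1 ≤ m) (hn : 1 ≤ n) :
    (Int.gcd (B k m) (B k n) : ℤ) = B k (Nat.gcd m n) := by
  rw [B_gcd k hk3 m n]
  exact Int.natAbs_of_nonneg (B_nonneg k hk (Nat.gcd m n))
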